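/- For even n ≥ 6 and each 2 ≤ j ≤ n-2, the lobster tree A displays the character χ_j = X_{≤j-2} | a_{j-1} | b_{j-1} | a_j a_{j+1} | b_j b_{j+1} | a_{j+2} | b_{j+2} | X_{≥j+3}. -/

import Mathlib

/-!
Extend `χ_j` to a colouring of all vertices of `A`. The side vertex `v_j` gets the state of the
pair `a_j a_{j+1}` or `b_j b_{j+1}` hanging from it; `u_{j-1}, u_j, u_{j+1}, v_{j-1}, v_{j+1}`
get the state of the other pair, whose leaves hang from `v_{j-1}` and `v_{j+1}`; every other
`u_i`, `v_i` gets the state of `X_{≤j-2}` or of `X_{≥j+3}`. Then any two leaves of the same state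
are joined by a walk of their own colour. In a tree the path between two leaves lies on every walk
joining them, so each minimal subtree `T[S]` is monochromatic, and the subtrees of distinct states
are disjoint.
-/

namespace PP

/-- A vertex is a leaf (degree at most one) if it has at most one neighbour. -/
def IsLeafVert {V : Type} (G : SimpleGraph V) (w : V) : Prop :=
  ∀ w₁ w₂ : V, G.Adj w w₁ → G.Adj w w₂ → w₁ = w₂

/-- A (finite, unrooted) phylogenetic tree on a label set `X ⊆ L`:
its leaves are bijectively labelled by the elements of `X`. -/
structure PhyloTree {L : Type} (X : Set L) where
  V : Type
  finV : Finite V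
  G : SimpleGraph V
  isTree : G.IsTree
  leaf : L → V
  leaf_injOn : Set.InjOn leaf X
  leaf_isLeaf : ∀ x ∈ X, IsLeafVert G (leaf x)
  leaf_surj : ∀ w, IsLeafVert G w → ∃ x ∈ X, leaf x = w

/-- The vertex set of the minimal subtree `T[S]` spanning the leaves labelled by `S ∩ X`. -/
def subtree {L : Type} {X : Set L} (T : PhyloTree X) (S : Set L) : Set T.V :=
  {w | ∃ x ∈ S ∩ X, ∃ y ∈ S ∩ X,
        ∃ p : T.G.Walk (T.leaf x) (T.leaf y), p.IsPath ∧ w ∈ p.support}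

/-- `T` displays the character `χ` (a state assignment, whose nonempty fibres on `X`
are the states) if the minimal subtrees spanning distinct states are vertex-disjoint. -/
def displays {L : Type} {X : Set L} (T : PhyloTree X) (χ : L → ℕ) : Prop :=
  ∀ s t : ℕ, s ≠ t → Disjoint (subtree T {x | χ x = s}) (subtree T {x | χ x = t})

/-- A set of characters is compatible if some tree on `X` displays all of them. -/
def compatible {L : Type} (X : Set L) (C : Set (L → ℕ)) : Prop :=
  ∃ T : PhyloTree X, ∀ χ ∈ C, displays T χ

/-- Labels: `(false, i)` is `aᵢ`, `(true, i)` is `bᵢ`. -/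
abbrev Lbl : Type := Bool × ℕ

def a (i : ℕ) : Lbl := (false, i)
def b (i : ℕ) : Lbl := (true, i)

/-- `X = {a₁,…,aₙ,b₁,…,bₙ}`. -/
def Xset (n : ℕ) : Set Lbl := {p | 1 ≤ p.2 ∧ p.2 ≤ n}

/-- `X_{≤ i} = {aⱼ, bⱼ : 1 ≤ j ≤ i}`. -/
def XLE (i : ℕ) : Set Lbl := {p | 1 ≤ p.2 ∧ p.2 ≤ i}

/-- χ_j = X_{≤j-2} | a_{j-1} | b_{j-1} | a_j a_{j+1} | b_j b_{j+1} | a_{j+2} | b_{j+2} | X_{≥j+3} -/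
def chi (j : ℕ) : Lbl → ℕ := fun p =>
  if p.2 + 2 ≤ j then 0
  else if p.2 + 1 = j then cond p.1 2 1
  else if p.2 ≤ j + 1 then cond p.1 4 3
  else if p.2 = j + 2 then cond p.1 6 5
  else 7

def phiMain (j i : ℕ) : ℕ :=
  if i < j then 0 else if i = j then 3 else if i = j + 1 then 4 else 5

def phiSide (j i : ℕ) : ℕ :=
  if i + 3 ≤ j then 0 else if i + 2 = j then 1 else if i + 1 = j then 2 else 5

/-- For even j: φ_j = X_{≤j-3}∪{b_{j-2},b_{j-1}} | a_{j-2} | a_{j-1} | b_j | b_{j+1} | {a_j,a_{j+1}}∪X_{≥j+2};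
for odd j the roles of a and b are swapped. -/
def phi (j : ℕ) : Lbl → ℕ := fun p =>
  if j % 2 = 0 then cond p.1 (phiMain j p.2) (phiSide j p.2)
  else cond p.1 (phiSide j p.2) (phiMain j p.2)

/-- Ω_A = a₁b₁b₂ | {a₂} ∪ X_{≥3}. -/
def OmA : Lbl → ℕ := fun p =>
  cond p.1 (if p.2 ≤ 2 then 0 else 1) (if p.2 = 1 then 0 else 1)

/-- Ω_B = X_{≤n-2} ∪ {b_{n-1}} | a_{n-1} aₙ bₙ. -/
def OmB (n : ℕ) : Lbl → ℕ := fun p =>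
  cond p.1 (if p.2 = n then 1 else 0) (if p.2 + 1 ≥ n then 1 else 0)

/-- The edges of the lobster `A`: central path a₁,u₁,…,u_{n-1},aₙ; edges uᵢvᵢ;
for odd i, vᵢ is adjacent to bᵢ and b_{i+1}; for even i, vᵢ is adjacent to aᵢ and a_{i+1}. -/
def AdjSpecA (n : ℕ) {X : Set Lbl} (T : PhyloTree X) (u v : ℕ → T.V) (w w' : T.V) : Prop :=
  (w = T.leaf (a 1) ∧ w' = u 1) ∨
  (∃ i, 1 ≤ i ∧ i + 1 ≤ n - 1 ∧ w = u i ∧ w' = u (i + 1)) ∨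
  (w = u (n - 1) ∧ w' = T.leaf (a n)) ∨
  (∃ i, 1 ≤ i ∧ i ≤ n - 1 ∧ w = u i ∧ w' = v i) ∨
  (∃ i, 1 ≤ i ∧ i ≤ n - 1 ∧ i % 2 = 1 ∧ w = v i ∧
      (w' = T.leaf (b i) ∨ w' = T.leaf (b (i + 1)))) ∨
  (∃ i, 1 ≤ i ∧ i ≤ n - 1 ∧ i % 2 = 0 ∧ w = v i ∧
      (w' = T.leaf (a i) ∨ w' = T.leaf (a (i + 1))))

/-- `T`, with internal vertices `u i`, `v i` (1 ≤ i ≤ n-1), is the lobster `A`. -/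
def IsLobsterA (n : ℕ) (T : PhyloTree (Xset n)) (u v : ℕ → T.V) : Prop :=
  (∀ i j, 1 ≤ i → i ≤ n - 1 → 1 ≤ j → j ≤ n - 1 →
      (u i = u j → i = j) ∧ (v i = v j → i = j) ∧ u i ≠ v j) ∧
  (∀ p ∈ Xset n, ∀ i, 1 ≤ i → i ≤ n - 1 → T.leaf p ≠ u i ∧ T.leaf p ≠ v i) ∧
  (∀ w : T.V, (∃ p ∈ Xset n, T.leaf p = w) ∨
      (∃ i, 1 ≤ i ∧ i ≤ n - 1 ∧ (u i = w ∨ v i = w))) ∧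
  (∀ w w' : T.V, T.G.Adj w w' ↔ (AdjSpecA n T u v w w' ∨ AdjSpecA n T u v w' w))

end PP

namespace SimpleGraph

variable {V α : Type*}

def monochrome (G : SimpleGraph V) (f : V → α) : SimpleGraph V where
  Adj x y := G.Adj x y ∧ f x = f y
  symm := ⟨fun _ _ h => ⟨h.1.symm, h.2.symm⟩⟩
  loopless := ⟨fun _ h => G.irrefl h.1⟩

variable {G : SimpleGraph V} {f : V → α}

@[simp] theorem monochrome_adj {x y : V} : (G.monochrome f).Adj x y ↔ G.Adj x y ∧ f x = f y :=
  Iff.rfl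

theorem monochrome_le : G.monochrome f ≤ G := fun _ _ h => (monochrome_adj.1 h).1

theorem Reachable.apply_eq_of_monochrome {x y : V} (h : (G.monochrome f).Reachable x y) :
    f x = f y := by
  obtain ⟨p⟩ := h
  induction p with
  | nil => rfl
  | cons hadj _ ih => exact (monochrome_adj.1 hadj).2.trans ih

theorem IsAcyclic.support_subset_of_isPath (hG : G.IsAcyclic) {x y : V} (q : G.Walk x y)
    {p : G.Walk x y} (hp : p.IsPath) : p.support ⊆ q.support := by
  classical
  have : p = q.bypass :=
    congrArg Subtype.val ((hG.subsingleton_path x y).elim ⟨p, hp⟩ ⟨q.bypass, q.bypass_isPath⟩)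
  exact this ▸ q.support_bypass_subset_support

theorem reachable_of_adj_succ {w : ℕ → V} {i k : ℕ} (hik : i ≤ k)
    (h : ∀ m, i ≤ m → m < k → G.Adj (w m) (w (m + 1))) : G.Reachable (w i) (w k) := by
  induction k, hik using Nat.le_induction with
  | base => rfl
  | succ k hik ih =>
    exact (ih fun m h₁ h₂ => h m h₁ (by omega)).trans (h k hik k.lt_succ_self).reachable

end SimpleGraph

namespace PP

open SimpleGraph

section Displays

variable {L : Type} {X : Set L} (T : PhyloTree X) {χ : L → ℕ} {f : T.V → ℕ}

theorem apply_eq_of_mem_subtree (hf : ∀ x ∈ X, f (T.leaf x) = χ x)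
    (hreach : ∀ x ∈ X, ∀ y ∈ X, χ x = χ y → (T.G.monochrome f).Reachable (T.leaf x) (T.leaf y))
    {s : ℕ} {w : T.V} (hw : w ∈ subtree T {x | χ x = s}) : f w = s := by
  classical
  obtain ⟨x, ⟨rfl, hx⟩, y, ⟨hy, hyX⟩, p, hp, hwp⟩ := hw
  obtain ⟨q⟩ := hreach x hx y hyX hy.symm
  have hwq : w ∈ q.support := by
    rw [← q.support_mapLe_eq_support monochrome_le]
    exact T.isTree.isAcyclic.support_subset_of_isPath _ hp hwp
  rw [← hf x hx]
  exact (q.takeUntil w hwq).reachable.apply_eq_of_monochrome.symm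

theorem displays_of_reachable (hf : ∀ x ∈ X, f (T.leaf x) = χ x)
    (hreach : ∀ x ∈ X, ∀ y ∈ X, χ x = χ y →
      (T.G.monochrome f).Reachable (T.leaf x) (T.leaf y)) :
    displays T χ := fun _ _ hst => Set.disjoint_left.2 fun _ hs ht =>
  hst ((apply_eq_of_mem_subtree T hf hreach hs).symm.trans (apply_eq_of_mem_subtree T hf hreach ht))

end Displays

section Lobster

variable {n : ℕ} {T : PhyloTree (Xset n)} {u v : ℕ → T.V}

theorem IsLobsterA.adj (hA : IsLobsterA n T u v) {w w' : T.V} (h : AdjSpecA n T u v w w') :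
    T.G.Adj w w' :=
  (hA.2.2.2 w w').2 (Or.inl h)

theorem IsLobsterA.adj_leaf_a_one_u (hA : IsLobsterA n T u v) : T.G.Adj (T.leaf (a 1)) (u 1) :=
  hA.adj (Or.inl ⟨rfl, rfl⟩)

theorem IsLobsterA.adj_u_leaf_a_last (hA : IsLobsterA n T u v) :
    T.G.Adj (u (n - 1)) (T.leaf (a n)) :=
  hA.adj (Or.inr (Or.inr (Or.inl ⟨rfl, rfl⟩)))

theorem IsLobsterA.adj_u_succ (hA : IsLobsterA n T u v) {i : ℕ} (h₁ : 1 ≤ i) (h₂ : i + 1 ≤ n - 1) :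
    T.G.Adj (u i) (u (i + 1)) :=
  hA.adj (Or.inr (Or.inl ⟨i, h₁, h₂, rfl, rfl⟩))

theorem IsLobsterA.adj_u_v (hA : IsLobsterA n T u v) {i : ℕ} (h₁ : 1 ≤ i) (h₂ : i ≤ n - 1) :
    T.G.Adj (u i) (v i) :=
  hA.adj (Or.inr (Or.inr (Or.inr (Or.inl ⟨i, h₁, h₂, rfl, rfl⟩))))

theorem IsLobsterA.adj_v_leaf (hA : IsLobsterA n T u v) {β : Bool} {i k : ℕ} (h₁ : 1 ≤ i)
    (h₂ : i ≤ n - 1) (hpar : i % 2 = β.toNat) (hk : k = i ∨ k = i + 1) :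
    T.G.Adj (v i) (T.leaf (β, k)) := by
  cases β
  · exact hA.adj (Or.inr (Or.inr (Or.inr (Or.inr (Or.inr
      ⟨i, h₁, h₂, hpar, rfl, hk.imp (congrArg (T.leaf ∘ a)) (congrArg (T.leaf ∘ a))⟩)))))
  · exact hA.adj (Or.inr (Or.inr (Or.inr (Or.inr (Or.inl
      ⟨i, h₁, h₂, hpar, rfl, hk.imp (congrArg (T.leaf ∘ b)) (congrArg (T.leaf ∘ b))⟩)))))

theorem IsLobsterA.injOn_u (hA : IsLobsterA n T u v) : Set.InjOn u (Set.Icc 1 (n - 1)) :=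
  fun i hi k hk h => (hA.1 i k hi.1 hi.2 hk.1 hk.2).1 h

theorem IsLobsterA.injOn_v (hA : IsLobsterA n T u v) : Set.InjOn v (Set.Icc 1 (n - 1)) :=
  fun i hi k hk h => (hA.1 i k hi.1 hi.2 hk.1 hk.2).2.1 h

open Classical in
noncomputable def lobsterColoring (n : ℕ) (T : PhyloTree (Xset n)) (u v : ℕ → T.V)
    (cu cv : ℕ → ℕ) (cl : Lbl → ℕ) (z : T.V) : ℕ :=
  if z ∈ u '' Set.Icc 1 (n - 1) then cu (Function.invFunOn u (Set.Icc 1 (n - 1)) z)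
  else if z ∈ v '' Set.Icc 1 (n - 1) then cv (Function.invFunOn v (Set.Icc 1 (n - 1)) z)
  else cl (Function.invFunOn T.leaf (Xset n) z)

variable {cu cv : ℕ → ℕ} {cl : Lbl → ℕ}

theorem IsLobsterA.lobsterColoring_u (hA : IsLobsterA n T u v) {i : ℕ}
    (hi : i ∈ Set.Icc 1 (n - 1)) : lobsterColoring n T u v cu cv cl (u i) = cu i := by
  rw [lobsterColoring, if_pos (Set.mem_image_of_mem u hi), hA.injOn_u.leftInvOn_invFunOn hi]

theorem IsLobsterA.lobsterColoring_v (hA : IsLobsterA n T u v) {i : ℕ}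
    (hi : i ∈ Set.Icc 1 (n - 1)) : lobsterColoring n T u v cu cv cl (v i) = cv i := by
  have hu : v i ∉ u '' Set.Icc 1 (n - 1) := fun ⟨k, hk, h⟩ =>
    (hA.1 k i hk.1 hk.2 hi.1 hi.2).2.2 h
  rw [lobsterColoring, if_neg hu, if_pos (Set.mem_image_of_mem v hi),
    hA.injOn_v.leftInvOn_invFunOn hi]

theorem IsLobsterA.lobsterColoring_leaf (hA : IsLobsterA n T u v) {p : Lbl} (hp : p ∈ Xset n) :
    lobsterColoring n T u v cu cv cl (T.leaf p) = cl p := by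
  have hu : T.leaf p ∉ u '' Set.Icc 1 (n - 1) := fun ⟨k, hk, h⟩ =>
    (hA.2.1 p hp k hk.1 hk.2).1 h.symm
  have hv : T.leaf p ∉ v '' Set.Icc 1 (n - 1) := fun ⟨k, hk, h⟩ =>
    (hA.2.1 p hp k hk.1 hk.2).2 h.symm
  rw [lobsterColoring, if_neg hu, if_neg hv, T.leaf_injOn.leftInvOn_invFunOn hp]

/-- The leaf `p` hangs from `u (spineAnchor n p)`: directly for `a 1` and `a n`, through
`v (spineAnchor n p)` otherwise. -/
def spineAnchor (n : ℕ) (p : Lbl) : ℕ :=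
  if p = a 1 then 1 else if p = a n then n - 1 else if p.2 % 2 = p.1.toNat then p.2 else p.2 - 1

theorem spineAnchor_bounds (hn : Even n) {p : Lbl} (hp : p ∈ Xset n) :
    1 ≤ spineAnchor n p ∧ spineAnchor n p ≤ n - 1 ∧ p.2 ≤ spineAnchor n p + 1 ∧
      spineAnchor n p ≤ p.2 := by
  obtain ⟨β, i⟩ := p
  obtain ⟨h₁, h₂⟩ := hp
  rw [Nat.even_iff] at hn
  cases β <;> simp only [spineAnchor, a, Prod.mk.injEq, Bool.toNat, cond, true_and, reduceCtorEq,
    false_and, if_false] <;> split_ifs <;> omega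

theorem spineAnchor_mod_two {p : Lbl} (h₁ : p ≠ a 1) (hₙ : p ≠ a n) (hp : 1 ≤ p.2) :
    spineAnchor n p % 2 = p.1.toNat := by
  obtain ⟨β, i⟩ := p
  rw [spineAnchor, if_neg h₁, if_neg hₙ]
  cases β <;> simp only [Bool.toNat, cond] at hp ⊢ <;> split_ifs <;> omega

theorem IsLobsterA.adj_spineAnchor (hA : IsLobsterA n T u v) (hn : Even n) {p : Lbl}
    (hp : p ∈ Xset n) :
    T.G.Adj (T.leaf p) (u (spineAnchor n p)) ∨ T.G.Adj (T.leaf p) (v (spineAnchor n p)) := by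
  obtain ⟨h₁, h₂, h₃, h₄⟩ := spineAnchor_bounds hn hp
  by_cases ha₁ : p = a 1
  · subst ha₁
    exact Or.inl hA.adj_leaf_a_one_u
  by_cases haₙ : p = a n
  · subst haₙ
    simpa [spineAnchor, ha₁] using Or.inl hA.adj_u_leaf_a_last.symm
  obtain ⟨β, i⟩ := p
  exact Or.inr (hA.adj_v_leaf h₁ h₂ (spineAnchor_mod_two ha₁ haₙ hp.1) (by omega)).symm

variable {f : T.V → ℕ}

theorem IsLobsterA.reachable_u (hA : IsLobsterA n T u v) {i k c : ℕ}
    (hi : i ∈ Set.Icc 1 (n - 1)) (hk : k ∈ Set.Icc 1 (n - 1))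
    (hf : ∀ m ∈ Set.uIcc i k, f (u m) = c) : (T.G.monochrome f).Reachable (u i) (u k) := by
  wlog hik : i ≤ k generalizing i k
  · exact (this hk hi (Set.uIcc_comm i k ▸ hf) (by omega)).symm
  simp only [Set.mem_Icc] at hi hk
  refine reachable_of_adj_succ hik fun m h₁ h₂ => monochrome_adj.2
    ⟨hA.adj_u_succ (by omega) (by omega), (hf m ?_).trans (hf (m + 1) ?_).symm⟩ <;>
  · rw [Set.mem_uIcc]; omega

theorem IsLobsterA.reachable_leaf_u (hA : IsLobsterA n T u v) (hn : Even n) {p : Lbl} {k : ℕ}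
    (hp : p ∈ Xset n) (hk : k ∈ Set.Icc 1 (n - 1))
    (hv : f (v (spineAnchor n p)) = f (T.leaf p))
    (hu : ∀ m ∈ Set.uIcc (spineAnchor n p) k, f (u m) = f (T.leaf p)) :
    (T.G.monochrome f).Reachable (T.leaf p) (u k) := by
  obtain ⟨h₁, h₂, -, -⟩ := spineAnchor_bounds hn hp
  have hanchor : (T.G.monochrome f).Reachable (T.leaf p) (u (spineAnchor n p)) := by
    rcases hA.adj_spineAnchor hn hp with h | h
    · exact (monochrome_adj.2 ⟨h, (hu _ Set.left_mem_uIcc).symm⟩).reachable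
    · exact (monochrome_adj.2 ⟨h, hv.symm⟩).reachable.trans
        (monochrome_adj.2
          ⟨(hA.adj_u_v h₁ h₂).symm, hv.trans (hu _ Set.left_mem_uIcc).symm⟩).reachable
  exact hanchor.trans (hA.reachable_u ⟨h₁, h₂⟩ hk hu)

end Lobster

section Chi

variable {n j : ℕ} {T : PhyloTree (Xset n)} {u v : ℕ → T.V}

theorem chi_eq_chi_cases {β β' : Bool} {i i' : ℕ} (h : chi j (β', i') = chi j (β, i)) :
    (i' + 2 ≤ j ∧ i + 2 ≤ j) ∨ (j + 3 ≤ i' ∧ j + 3 ≤ i) ∨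
      (β' = β ∧ (i' = i ∨ ((i' = j ∨ i' = j + 1) ∧ (i = j ∨ i = j + 1)))) := by
  cases β <;> cases β' <;> simp only [chi, cond] at h <;> split_ifs at h <;>
    simp only [true_and, Bool.false_eq_true, Bool.true_eq_false, false_and, or_false] <;> omega

def chiSpine (j i : ℕ) : ℕ :=
  if i + 2 ≤ j then 0 else if j + 2 ≤ i then 7 else if j % 2 = 0 then 4 else 3

def chiSide (j i : ℕ) : ℕ :=
  if i + 2 ≤ j then 0 else if j + 2 ≤ i then 7
  else if i = j then (if j % 2 = 0 then 3 else 4) else (if j % 2 = 0 then 4 else 3)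

noncomputable def chiColoring (n j : ℕ) (T : PhyloTree (Xset n)) (u v : ℕ → T.V) : T.V → ℕ :=
  lobsterColoring n T u v (chiSpine j) (chiSide j) (chi j)

theorem IsLobsterA.reachable_leaf_u_one (hA : IsLobsterA n T u v) (hn : Even n) {x : Lbl}
    (hx : x ∈ Xset n) (hi : x.2 + 2 ≤ j) :
    (T.G.monochrome (chiColoring n j T u v)).Reachable (T.leaf x) (u 1) := by
  obtain ⟨h₁, h₂, -, h₄⟩ := spineAnchor_bounds hn hx
  unfold chiColoring
  refine hA.reachable_leaf_u hn hx ⟨le_rfl, by omega⟩ ?_ fun m hm => ?_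
  · rw [hA.lobsterColoring_leaf hx, hA.lobsterColoring_v ⟨h₁, h₂⟩, chi, chiSide]
    split_ifs <;> omega
  · rw [Set.mem_uIcc] at hm
    rw [hA.lobsterColoring_leaf hx, hA.lobsterColoring_u ⟨by omega, by omega⟩, chi, chiSpine]
    split_ifs <;> omega

theorem IsLobsterA.reachable_leaf_u_last (hA : IsLobsterA n T u v) (hn : Even n) {x : Lbl}
    (hx : x ∈ Xset n) (hi : j + 3 ≤ x.2) :
    (T.G.monochrome (chiColoring n j T u v)).Reachable (T.leaf x) (u (n - 1)) := by
  obtain ⟨h₁, h₂, h₃, -⟩ := spineAnchor_bounds hn hx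
  unfold chiColoring
  refine hA.reachable_leaf_u hn hx ⟨by omega, le_rfl⟩ ?_ fun m hm => ?_
  · rw [hA.lobsterColoring_leaf hx, hA.lobsterColoring_v ⟨h₁, h₂⟩, chi, chiSide]
    split_ifs <;> omega
  · rw [Set.mem_uIcc] at hm
    rw [hA.lobsterColoring_leaf hx, hA.lobsterColoring_u ⟨by omega, by omega⟩, chi, chiSpine]
    split_ifs <;> omega

theorem IsLobsterA.reachable_leaf_v_of_pair (hA : IsLobsterA n T u v) (hj : 1 ≤ j) (hj' : j ≤ n - 1)
    {β : Bool} {i : ℕ} (hpar : j % 2 = β.toNat) (hi : i = j ∨ i = j + 1) :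
    (T.G.monochrome (chiColoring n j T u v)).Reachable (T.leaf (β, i)) (v j) := by
  have hx : (β, i) ∈ Xset n := ⟨by omega, by omega⟩
  unfold chiColoring
  refine (monochrome_adj.2 ⟨(hA.adj_v_leaf hj hj' hpar hi).symm, ?_⟩).reachable
  rw [hA.lobsterColoring_leaf hx, hA.lobsterColoring_v ⟨hj, hj'⟩, chi, chiSide]
  cases β <;> simp only [Bool.toNat, cond] at hpar ⊢ <;> split_ifs <;> omega

theorem IsLobsterA.reachable_leaf_u_of_pair (hA : IsLobsterA n T u v) (hn : Even n) (hj : 2 ≤ j)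
    (hj' : j ≤ n - 2) {β : Bool} {i : ℕ} (hpar : j % 2 ≠ β.toNat) (hi : i = j ∨ i = j + 1) :
    (T.G.monochrome (chiColoring n j T u v)).Reachable (T.leaf (β, i)) (u j) := by
  have hx : (β, i) ∈ Xset n := ⟨by omega, by omega⟩
  obtain ⟨h₁, h₂, h₃, h₄⟩ := spineAnchor_bounds hn hx
  have hmod := spineAnchor_mod_two (n := n) (p := (β, i)) (by rintro ⟨⟩; omega)
    (by rintro ⟨⟩; omega) (by dsimp only; omega)
  unfold chiColoring
  refine hA.reachable_leaf_u hn hx ⟨by omega, by omega⟩ ?_ fun m hm => ?_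
  · rw [hA.lobsterColoring_leaf hx, hA.lobsterColoring_v ⟨h₁, h₂⟩, chi, chiSide]
    cases β <;> simp only [Bool.toNat, cond] at hpar hmod ⊢ <;> split_ifs <;> omega
  · rw [Set.mem_uIcc] at hm
    rw [hA.lobsterColoring_leaf hx, hA.lobsterColoring_u ⟨by omega, by omega⟩, chi, chiSpine]
    cases β <;> simp only [Bool.toNat, cond] at hpar hmod ⊢ <;> split_ifs <;> omega

theorem IsLobsterA.exists_reachable_of_chi_eq (hA : IsLobsterA n T u v) (hn : Even n)
    (hj : 2 ≤ j) (hj' : j ≤ n - 2) (x : Lbl) :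
    ∃ r, ∀ y ∈ Xset n, chi j y = chi j x →
      (T.G.monochrome (chiColoring n j T u v)).Reachable (T.leaf y) r := by
  obtain ⟨β, i⟩ := x
  by_cases hlow : i + 2 ≤ j
  · refine ⟨u 1, fun ⟨β', i'⟩ hy hyx => hA.reachable_leaf_u_one hn hy ?_⟩
    rcases chi_eq_chi_cases hyx with h | h | h <;> omega
  by_cases hhigh : j + 3 ≤ i
  · refine ⟨u (n - 1), fun ⟨β', i'⟩ hy hyx => hA.reachable_leaf_u_last hn hy ?_⟩
    rcases chi_eq_chi_cases hyx with h | h | h <;> omega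
  have hsame : ∀ {β' i'}, chi j (β', i') = chi j (β, i) →
      β' = β ∧ (i' = i ∨ ((i' = j ∨ i' = j + 1) ∧ (i = j ∨ i = j + 1))) := fun hyx => by
    rcases chi_eq_chi_cases hyx with h | h | h
    · omega
    · omega
    · exact h
  by_cases hpair : i = j ∨ i = j + 1
  · by_cases hpar : j % 2 = β.toNat
    · refine ⟨v j, fun ⟨β', i'⟩ _ hyx => ?_⟩
      obtain ⟨rfl, hi'⟩ := hsame hyx
      exact hA.reachable_leaf_v_of_pair (by omega) (by omega) hpar (by omega)
    · refine ⟨u j, fun ⟨β', i'⟩ _ hyx => ?_⟩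
      obtain ⟨rfl, hi'⟩ := hsame hyx
      exact hA.reachable_leaf_u_of_pair hn hj hj' hpar (by omega)
  · refine ⟨T.leaf (β, i), fun ⟨β', i'⟩ _ hyx => ?_⟩
    obtain ⟨rfl, hi'⟩ := hsame hyx
    obtain rfl : i' = i := by omega
    rfl

end Chi

theorem lobsterA_displays_chi_general (n : ℕ) (hn : Even n)
    (T : PhyloTree (Xset n)) (u v : ℕ → T.V) (hA : IsLobsterA n T u v)
    (j : ℕ) (hj : 2 ≤ j) (hj' : j ≤ n - 2) :
    displays T (chi j) := by
  refine displays_of_reachable T (f := chiColoring n j T u v)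
    (fun x hx => hA.lobsterColoring_leaf hx) fun x hx y hy hxy => ?_
  obtain ⟨r, hr⟩ := hA.exists_reachable_of_chi_eq hn hj hj' x
  exact (hr x hx rfl).trans (hr y hy hxy.symm).symm

theorem lobsterA_displays_chi (n : ℕ) (hn : Even n) (hn6 : 6 ≤ n)
    (T : PhyloTree (Xset n)) (u v : ℕ → T.V) (hA : IsLobsterA n T u v)
    (j : ℕ) (hj : 2 ≤ j) (hj' : j ≤ n - 2) :
    displays T (chi j) :=
  lobsterA_displays_chi_general n hn T u v hA j hj hj'

end PP
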